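/- arXiv:2004.08873 — 3 statements merged into one kernel-verified Lean document; each statement's English description precedes it below -/
import Mathlib

section
/- Let (R, m) be a Noetherian local ring, I = (f_1,...,f_r) an ideal, J an ideal of R, and k ≥ 0 an integer such that m^{k+1} + I = J m^k + I (i.e., J is a reduction of m modulo I with reduction number at most k). Then for every perturbed ideal I' = (f_1+ε_1,...,f_r+ε_r) with ε_i ∈ m^{k+2}, one has m^{k+2} + I' = J m^{k+1} + I'. In particular, J is a reduction of m modulo I' with reduction number at most k+1. -/
open IsLocalRing Filter

/-- The length of an `R`-module `M`, defined as the Krull dimension of its lattice of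
submodules (the supremum of lengths of strictly increasing chains of submodules). -/
noncomputable def modLen (R : Type) [CommRing R] (M : Type) [AddCommGroup M] [Module R M] :
    WithBot ℕ∞ := Order.krullDim (Submodule R M)

/-- The length of the `i`-th local cohomology module of `M` with support in `J`. -/
noncomputable def lcLen (R : Type) [CommRing R] (J : Ideal R) (i : ℕ) (M : Type)
    [AddCommGroup M] [Module R M] : WithBot ℕ∞ :=
  modLen R ((localCohomology J i).obj (ModuleCat.of R M))

/-! Multiplying the reduction equation by `m` gives `m^{k+2} + mI = J m^{k+1} + mI`. Since
`I ⊆ I' + m^{k+2}`, this yields `m^{k+2} ⊆ J m^{k+1} + I' + m · m^{k+2}`, and Nakayama's lemma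
removes the last term; the reverse inclusion is immediate because `mI ⊆ I ⊆ I' + m^{k+2}`. -/

namespace Ideal

variable {R : Type*} [CommRing R]

theorem span_range_le_span_range_add_sup {ι : Type*} (f ε : ι → R) {N : Ideal R}
    (hε : ∀ i, ε i ∈ N) :
    span (Set.range f) ≤ span (Set.range fun i => f i + ε i) ⊔ N := by
  rw [span_le]
  rintro _ ⟨i, rfl⟩
  rw [← add_sub_cancel_right (f i) (ε i)]
  exact sub_mem (mem_sup_left (subset_span ⟨i, rfl⟩)) (mem_sup_right (hε i))

theorem pow_add_one_sup_mul_eq {m I J : Ideal R} {k : ℕ}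
    (h : m ^ (k + 1) ⊔ I = J * m ^ k ⊔ I) :
    m ^ (k + 2) ⊔ m * I = J * m ^ (k + 1) ⊔ m * I := by
  have := congrArg (m * ·) h
  simp only [mul_sup] at this
  convert this using 2 <;> ring

theorem mul_le_sup_mul_of_le_sup {m I I' N : Ideal R} (h : I ≤ I' ⊔ N) :
    m * I ≤ I' ⊔ m * N :=
  calc m * I ≤ m * (I' ⊔ N) := mul_mono_right h
    _ = m * I' ⊔ m * N := mul_sup _ _ _
    _ ≤ I' ⊔ m * N := sup_le_sup_right mul_le_right _

theorem sup_eq_sup_of_sup_mul_eq {m I I' N K : Ideal R} (hN : N.FG) (hm : m ≤ jacobson ⊥)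
    (h : N ⊔ m * I = K ⊔ m * I) (hI : I ≤ I' ⊔ N) :
    N ⊔ I' = K ⊔ I' := by
  refine le_antisymm (sup_le ?_ le_sup_right) (sup_le ?_ le_sup_right)
  · refine Submodule.le_of_le_smul_of_le_jacobson_bot hN hm ?_
    calc N ≤ K ⊔ m * I := le_sup_left.trans h.le
      _ ≤ K ⊔ (I' ⊔ m * N) := sup_le_sup_left (mul_le_sup_mul_of_le_sup hI) _
      _ = K ⊔ I' ⊔ m • N := by rw [sup_assoc, smul_eq_mul]
  · calc K ≤ N ⊔ m * I := le_sup_left.trans h.ge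
      _ ≤ N ⊔ (I' ⊔ N) := sup_le_sup_left (mul_le_right.trans hI) _
      _ = N ⊔ I' := by rw [sup_comm I', ← sup_assoc, sup_idem]

end Ideal

theorem statement2 (R : Type) [CommRing R] [IsNoetherianRing R] [IsLocalRing R]
    (r k : ℕ) (f : Fin r → R) (I J : Ideal R) (hI : I = Ideal.span (Set.range f))
    (hred : maximalIdeal R ^ (k + 1) ⊔ I = J * maximalIdeal R ^ k ⊔ I)
    (ε : Fin r → R) (hε : ∀ i, ε i ∈ maximalIdeal R ^ (k + 2)) :
    maximalIdeal R ^ (k + 2) ⊔ Ideal.span (Set.range fun i => f i + ε i) =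
      J * maximalIdeal R ^ (k + 1) ⊔ Ideal.span (Set.range fun i => f i + ε i) := by
  subst hI
  exact Ideal.sup_eq_sup_of_sup_mul_eq (IsNoetherian.noetherian _)
    (maximalIdeal_le_jacobson _) (Ideal.pow_add_one_sup_mul_eq hred)
    (Ideal.span_range_le_span_range_add_sup f ε hε)
end

section
/- Let (R, m) be a Noetherian local ring and x_1,...,x_s a d-sequence on R/I for an ideal I, with J' = (x_1,...,x_s) (images in R/I). Then for all m ≥ 0, (I + J')^{m+1} ∩ I = I (I + J')^m. -/
open IsLocalRing Filter

/-!
Write `D_t = I + (x_l : l < t)` (this is `prefixIdeal I x t`) and `J = (x_0, …, x_{s-1})`.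
The d-sequence condition `(D_i : x_i x_j) = (D_i : x_j)` implies `(D_i : x_i) ∩ J ⊆ D_i`: if
`y x_i ∈ D_i` then `y x_t ∈ D_i` for all `t ≥ i`, and `(D_t : x_t²) = (D_t : x_t)` lets one peel
the `x_t`-component off `y ∈ D_{t+1}`, moving `y` down from `D_s ⊇ J` to `D_i`.
Huneke's argument then proves `D_t ∩ J^{m+1} ⊆ D_t J^m` by induction on `m` and downward
induction on `t`, starting from `J ⊆ D_s`. At `t = 0` this is `I ∩ J^{m+1} ⊆ I J^m`, and
`(I + J)^{m+1} ⊆ I (I + J)^m + J^{m+1}` gives the theorem.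
-/

open Ideal

namespace Ideal

variable {R : Type*} [CommRing R] {I J : Ideal R}

lemma sup_pow_succ_le (m : ℕ) : (I ⊔ J) ^ (m + 1) ≤ I * (I ⊔ J) ^ m ⊔ J ^ (m + 1) := by
  induction m with
  | zero => simp
  | succ m ih =>
    calc (I ⊔ J) ^ (m + 2) = (I ⊔ J) ^ (m + 1) * (I ⊔ J) := pow_succ _ _
      _ ≤ (I * (I ⊔ J) ^ m ⊔ J ^ (m + 1)) * (I ⊔ J) := Ideal.mul_mono_left ih
      _ = I * (I ⊔ J) ^ (m + 1) ⊔ (J ^ (m + 1) * I ⊔ J ^ (m + 2)) := by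
        rw [sup_mul, mul_assoc, ← pow_succ, mul_sup, ← pow_succ]
      _ ≤ I * (I ⊔ J) ^ (m + 1) ⊔ J ^ (m + 2) := by
        refine sup_le le_sup_left (sup_le (le_sup_of_le_left ?_) le_sup_right)
        rw [mul_comm]
        exact Ideal.mul_mono_right (pow_right_mono le_sup_right _)

lemma sup_pow_succ_inf_eq_mul_sup_pow {m : ℕ} (h : I ⊓ J ^ (m + 1) ≤ I * J ^ m) :
    (I ⊔ J) ^ (m + 1) ⊓ I = I * (I ⊔ J) ^ m := by
  refine le_antisymm ?_ (le_inf ?_ mul_le_left)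
  · calc (I ⊔ J) ^ (m + 1) ⊓ I ≤ (I * (I ⊔ J) ^ m ⊔ J ^ (m + 1)) ⊓ I :=
          inf_le_inf_right I (sup_pow_succ_le m)
      _ = I * (I ⊔ J) ^ m ⊔ I ⊓ J ^ (m + 1) := by
          rw [sup_inf_assoc_of_le _ mul_le_left, inf_comm]
      _ ≤ I * (I ⊔ J) ^ m :=
          sup_le le_rfl (h.trans (Ideal.mul_mono_right (pow_right_mono le_sup_right m)))
  · rw [pow_succ']
    exact Ideal.mul_mono_left le_sup_left

end Ideal

section DSequence

variable {R : Type*} [CommRing R] {s : ℕ}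

noncomputable def prefixIdeal (I : Ideal R) (x : Fin s → R) (t : ℕ) : Ideal R :=
  I ⊔ span (x '' {l | (l : ℕ) < t})

/-- `x` is a d-sequence on `R ⧸ I`, phrased in `R` through the preimages `prefixIdeal I x i`
of the ideals `(x_l : l < i)` of `R ⧸ I`. -/
def IsDSequenceModulo (I : Ideal R) (x : Fin s → R) : Prop :=
  ∀ i j : Fin s, i ≤ j → ∀ r : R,
    r * (x i * x j) ∈ prefixIdeal I x i → r * x j ∈ prefixIdeal I x i

variable {I : Ideal R} {x : Fin s → R}

lemma prefixIdeal_mono : Monotone (prefixIdeal I x) := fun _ _ h =>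
  sup_le_sup_left (span_mono (Set.image_mono fun _ hl => lt_of_lt_of_le hl h)) _

@[simp]
lemma prefixIdeal_zero : prefixIdeal I x 0 = I := by
  simp [prefixIdeal]

lemma prefixIdeal_succ {t : ℕ} (ht : t < s) :
    prefixIdeal I x (t + 1) = prefixIdeal I x t ⊔ span {x ⟨t, ht⟩} := by
  have : {l : Fin s | (l : ℕ) < t + 1} =
      insert (⟨t, ht⟩ : Fin s) {l : Fin s | (l : ℕ) < t} := by
    ext l
    simp [Fin.ext_iff, le_iff_eq_or_lt]
  rw [prefixIdeal, this, Set.image_insert_eq, span_insert, prefixIdeal, sup_assoc,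
    sup_comm (span {_})]

lemma span_range_le_prefixIdeal : span (Set.range x) ≤ prefixIdeal I x s :=
  le_sup_of_le_right (span_mono (by rintro _ ⟨l, rfl⟩; exact ⟨l, l.isLt, rfl⟩))

lemma comap_mk_span_eq_prefixIdeal (i : Fin s) :
    comap (Ideal.Quotient.mk I)
        (span {z | ∃ l : Fin s, l < i ∧ z = Ideal.Quotient.mk I (x l)}) = prefixIdeal I x i := by
  have : span {z | ∃ l : Fin s, l < i ∧ z = Ideal.Quotient.mk I (x l)} =
      map (Ideal.Quotient.mk I) (span (x '' {l | (l : ℕ) < i})) := by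
    rw [map_span, ← Set.image_comp]
    congr 1
    ext z
    simp [eq_comm]
  rw [this, comap_map_of_surjective _ Ideal.Quotient.mk_surjective, ← RingHom.ker_eq_comap_bot,
    mk_ker, prefixIdeal, sup_comm]

lemma isDSequenceModulo_of_colon_eq
    (hdseq : ∀ i j : Fin s, i ≤ j →
      Submodule.colon
        (span {z : R ⧸ I | ∃ l : Fin s, l < i ∧ z = Ideal.Quotient.mk I (x l)})
        (span {Ideal.Quotient.mk I (x i) * Ideal.Quotient.mk I (x j)}) =
      Submodule.colon
        (span {z : R ⧸ I | ∃ l : Fin s, l < i ∧ z = Ideal.Quotient.mk I (x l)})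
        (span {Ideal.Quotient.mk I (x j)})) :
    IsDSequenceModulo I x := by
  intro i j hij r h
  rw [← comap_mk_span_eq_prefixIdeal, Ideal.mem_comap, map_mul] at h ⊢
  rw [← mem_colon_span_singleton, ← hdseq i j hij, mem_colon_span_singleton]
  rwa [map_mul] at h

namespace IsDSequenceModulo

variable (hd : IsDSequenceModulo I x)
include hd

lemma mul_mem_of_le {i j : Fin s} (hij : i ≤ j) {y : R} (hy : y * x i ∈ prefixIdeal I x i) :
    y * x j ∈ prefixIdeal I x i :=
  hd i j hij y (by simpa only [mul_assoc] using mul_mem_right (x j) _ hy)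

lemma mem_of_mem_prefixIdeal_of_mul_mem (i : Fin s) {y : R}
    (hyx : y * x i ∈ prefixIdeal I x i) {t : ℕ}
    (hit : (i : ℕ) ≤ t) (hts : t ≤ s) (hy : y ∈ prefixIdeal I x t) :
    y ∈ prefixIdeal I x i := by
  induction t, hit using Nat.le_induction with
  | base => exact hy
  | succ t hit ih =>
    let xt : Fin s := ⟨t, hts⟩
    rw [prefixIdeal_succ hts] at hy
    obtain ⟨w, hw, _, hu, rfl⟩ := Submodule.mem_sup.1 hy
    obtain ⟨a, rfl⟩ := mem_span_singleton'.1 hu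
    have hyt : (w + a * x xt) * x xt ∈ prefixIdeal I x i := hd.mul_mem_of_le hit hyx
    have haxx : a * (x xt * x xt) ∈ prefixIdeal I x t := by
      have := sub_mem (prefixIdeal_mono hit hyt) (mul_mem_right (x xt) _ hw)
      convert this using 1
      ring
    exact ih (Nat.le_of_succ_le hts) (add_mem hw (hd xt xt le_rfl a haxx))

lemma mem_of_mul_mem (i : Fin s) {y : R} (hy : y ∈ span (Set.range x))
    (hyx : y * x i ∈ prefixIdeal I x i) : y ∈ prefixIdeal I x i :=
  hd.mem_of_mem_prefixIdeal_of_mul_mem i hyx i.isLt.le le_rfl (span_range_le_prefixIdeal hy)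

lemma prefixIdeal_inf_pow_succ_le (k : ℕ) {t : ℕ} (ht : t ≤ s) :
    prefixIdeal I x t ⊓ span (Set.range x) ^ (k + 1) ≤
      prefixIdeal I x t * span (Set.range x) ^ k := by
  induction k generalizing t with
  | zero => simp
  | succ k ih =>
    induction ht using Nat.decreasingInduction with
    | self =>
      calc prefixIdeal I x s ⊓ span (Set.range x) ^ (k + 2)
          ≤ span (Set.range x) * span (Set.range x) ^ (k + 1) := by
            rw [← pow_succ']
            exact inf_le_right
        _ ≤ prefixIdeal I x s * span (Set.range x) ^ (k + 1) :=
          Ideal.mul_mono_left span_range_le_prefixIdeal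
    | of_succ t ht ihs =>
      let xt : Fin s := ⟨t, ht⟩
      rintro y ⟨hyt, hyJ⟩
      have hy := ihs ⟨prefixIdeal_mono t.le_succ hyt, hyJ⟩
      rw [prefixIdeal_succ ht, Ideal.sup_mul] at hy
      obtain ⟨v, hv, _, hu, rfl⟩ := Submodule.mem_sup.1 hy
      obtain ⟨w, hw, rfl⟩ := mem_span_singleton_mul.1 hu
      have hxw : w * x xt ∈ prefixIdeal I x t := by
        simpa [mul_comm] using sub_mem hyt (mul_le_left hv)
      have hwD : w ∈ prefixIdeal I x t :=
        hd.mem_of_mul_mem xt (pow_le_self k.succ_ne_zero hw) hxw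
      have hxw' : x xt * w ∈ span (Set.range x) * (prefixIdeal I x t * span (Set.range x) ^ k) :=
        mul_mem_mul (subset_span ⟨xt, rfl⟩) (ih ht.le ⟨hwD, hw⟩)
      rw [mul_left_comm, ← pow_succ'] at hxw'
      exact add_mem hv hxw'

lemma inf_pow_succ_le (m : ℕ) :
    I ⊓ span (Set.range x) ^ (m + 1) ≤ I * span (Set.range x) ^ m := by
  simpa using hd.prefixIdeal_inf_pow_succ_le m (Nat.zero_le s)

end IsDSequenceModulo

end DSequence

theorem statement8_general (R : Type) [CommRing R]
    (s : ℕ) (I : Ideal R) (x : Fin s → R)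
    (hdseq : ∀ i j : Fin s, i ≤ j →
      Submodule.colon
        (Ideal.span {z : R ⧸ I | ∃ l : Fin s, l < i ∧ z = Ideal.Quotient.mk I (x l)})
        (Ideal.span {Ideal.Quotient.mk I (x i) * Ideal.Quotient.mk I (x j)}) =
      Submodule.colon
        (Ideal.span {z : R ⧸ I | ∃ l : Fin s, l < i ∧ z = Ideal.Quotient.mk I (x l)})
        (Ideal.span {Ideal.Quotient.mk I (x j)}))
    (J' : Ideal R) (hJ' : J' = Ideal.span (Set.range x)) :
    ∀ m : ℕ, (I ⊔ J') ^ (m + 1) ⊓ I = I * (I ⊔ J') ^ m := by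
  intro m
  subst hJ'
  exact sup_pow_succ_inf_eq_mul_sup_pow ((isDSequenceModulo_of_colon_eq hdseq).inf_pow_succ_le m)

theorem statement8 (R : Type) [CommRing R] [IsNoetherianRing R] [IsLocalRing R]
    (s : ℕ) (I : Ideal R) (x : Fin s → R)
    (hdseq : ∀ i j : Fin s, i ≤ j →
      Submodule.colon
        (Ideal.span {z : R ⧸ I | ∃ l : Fin s, l < i ∧ z = Ideal.Quotient.mk I (x l)})
        (Ideal.span {Ideal.Quotient.mk I (x i) * Ideal.Quotient.mk I (x j)}) =
      Submodule.colon
        (Ideal.span {z : R ⧸ I | ∃ l : Fin s, l < i ∧ z = Ideal.Quotient.mk I (x l)})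
        (Ideal.span {Ideal.Quotient.mk I (x j)}))
    (J' : Ideal R) (hJ' : J' = Ideal.span (Set.range x)) :
    ∀ m : ℕ, (I ⊔ J') ^ (m + 1) ⊓ I = I * (I ⊔ J') ^ m :=
  statement8_general R s I x hdseq J' hJ'
end

section
/- Let (R, m) be a Noetherian local ring, I and I' ideals of R, K' an ideal with K' = I + J' = I' + J' for some ideal J', and suppose K'^{m+1} ∩ I = I K'^m, K'^{m+1} ∩ I' = I' K'^m, and K' m^a + I = K' m^a + I' for a given a ≥ 0 and all m ≥ 0 (where also J' m^a + I = m^{a+t} + I = m^{a+t} + I' = J' m^a + I' for suitable t). Then ℓ((K'^{m+1}+I)/(K'^{m+1} m^a + I)) = ℓ((K'^{m+1}+I')/(K'^{m+1} m^a + I')) for all m ≥ 0. -/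
open IsLocalRing Filter

/-! Both quotients are identified with `K'^{m+1} / (K'^{m+1} m^a + K'^{m+1} ∩ I)`. By the
modular law `K'^{m+1} ∩ (K'^{m+1} m^a + I) = K'^{m+1} m^a + K'^{m+1} ∩ I`, and with
`K'^{m+1} ∩ I = I K'^m` this submodule is `K'^m (K' m^a + I)`, which by hypothesis does not change
when `I` is replaced by `I'`. -/

lemma modLen_congr {R M N : Type} [CommRing R] [AddCommGroup M] [Module R M]
    [AddCommGroup N] [Module R N] (e : M ≃ₗ[R] N) : modLen R M = modLen R N :=
  Order.krullDim_eq_of_orderIso (Submodule.orderIsoMapComap e)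

namespace Submodule

variable {R M : Type*} [Ring R] [AddCommGroup M] [Module R M]

noncomputable def mapMkQEquivQuotient (N A : Submodule R M) :
    map N.mkQ A ≃ₗ[R] A ⧸ comap A.subtype N :=
  (LinearEquiv.ofEq _ _ (by rw [LinearMap.range_comp, range_subtype])).trans
    ((N.mkQ ∘ₗ A.subtype).quotKerEquivRange.symm.trans
      (quotEquivOfEq _ _ (by rw [LinearMap.ker_comp, ker_mkQ])))

lemma map_mkQ_sup_of_le {N A I : Submodule R M} (hI : I ≤ N) :
    map N.mkQ (A ⊔ I) = map N.mkQ A := by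
  rw [map_sup, sup_eq_left]
  exact (map_mono hI).trans ((mkQ_map_self N).trans_le bot_le)

lemma comap_subtype_sup_of_le {A B : Submodule R M} (I : Submodule R M) (hB : B ≤ A) :
    comap A.subtype (B ⊔ I) = comap A.subtype (B ⊔ A ⊓ I) := by
  have hmod : A ⊓ (B ⊔ I) = A ⊓ (B ⊔ A ⊓ I) := by
    rw [sup_comm B (A ⊓ I), inf_sup_assoc_of_le I hB, inf_left_idem, sup_comm]
  exact le_antisymm (comap_subtype_le_iff.mpr hmod.le) (comap_subtype_le_iff.mpr hmod.ge)

end Submodule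

open Submodule in
lemma modLen_map_mkQ_sup_eq {R M : Type} [CommRing R] [AddCommGroup M] [Module R M]
    {A B I I' : Submodule R M} (hB : B ≤ A) (h : B ⊔ A ⊓ I = B ⊔ A ⊓ I') :
    modLen R (map (B ⊔ I).mkQ (A ⊔ I)) = modLen R (map (B ⊔ I').mkQ (A ⊔ I')) := by
  have hcomap : comap A.subtype (B ⊔ I) = comap A.subtype (B ⊔ I') := by
    rw [comap_subtype_sup_of_le I hB, comap_subtype_sup_of_le I' hB, h]
  rw [map_mkQ_sup_of_le le_sup_right, map_mkQ_sup_of_le le_sup_right]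
  exact modLen_congr <| (mapMkQEquivQuotient _ A).trans <|
    (quotEquivOfEq _ _ hcomap).trans (mapMkQEquivQuotient _ A).symm

lemma Ideal.pow_succ_mul_sup_mul_pow {R : Type*} [CommSemiring R] (K L J : Ideal R) (m : ℕ) :
    K ^ (m + 1) * L ⊔ J * K ^ m = K ^ m * (K * L ⊔ J) := by
  rw [Ideal.mul_sup, ← mul_assoc, ← pow_succ, mul_comm J]

theorem statement9_general (R : Type) [CommRing R] [IsLocalRing R]
    (I I' K' : Ideal R) (a : ℕ)
    (h1 : ∀ m : ℕ, K' ^ (m + 1) ⊓ I = I * K' ^ m)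
    (h2 : ∀ m : ℕ, K' ^ (m + 1) ⊓ I' = I' * K' ^ m)
    (h3 : K' * maximalIdeal R ^ a ⊔ I = K' * maximalIdeal R ^ a ⊔ I') :
    ∀ m : ℕ,
      modLen R (Submodule.map (K' ^ (m + 1) * maximalIdeal R ^ a ⊔ I).mkQ
          ((K' ^ (m + 1) ⊔ I) : Ideal R)) =
      modLen R (Submodule.map (K' ^ (m + 1) * maximalIdeal R ^ a ⊔ I').mkQ
          ((K' ^ (m + 1) ⊔ I') : Ideal R)) := by
  intro m
  refine modLen_map_mkQ_sup_eq Ideal.mul_le_left ?_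
  rw [h1 m, h2 m, Ideal.pow_succ_mul_sup_mul_pow, Ideal.pow_succ_mul_sup_mul_pow, h3]

theorem statement9 (R : Type) [CommRing R] [IsNoetherianRing R] [IsLocalRing R]
    (I I' J' K' : Ideal R) (a : ℕ)
    (hK : K' = I ⊔ J') (hK' : K' = I' ⊔ J')
    (h1 : ∀ m : ℕ, K' ^ (m + 1) ⊓ I = I * K' ^ m)
    (h2 : ∀ m : ℕ, K' ^ (m + 1) ⊓ I' = I' * K' ^ m)
    (h3 : K' * maximalIdeal R ^ a ⊔ I = K' * maximalIdeal R ^ a ⊔ I') :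
    ∀ m : ℕ,
      modLen R (Submodule.map (K' ^ (m + 1) * maximalIdeal R ^ a ⊔ I).mkQ
          ((K' ^ (m + 1) ⊔ I) : Ideal R)) =
      modLen R (Submodule.map (K' ^ (m + 1) * maximalIdeal R ^ a ⊔ I').mkQ
          ((K' ^ (m + 1) ⊔ I') : Ideal R)) :=
  statement9_general R I I' K' a h1 h2 h3
end
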